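/- Let F^k be a nonnegative L¹([0,1]²)⁴ solution of the truncated Broadwell system at level k with nonnegative boundary data f_b of finite mass. Then for almost every (x,y) ∈ [0,1]², (F^k_1 + F^k_2)(x,y) = F^k_1(1,y) + f_{b2}(y)∧(k/2) and (F^k_3 + F^k_4)(x,y) = F^k_3(x,1) + f_{b4}(x)∧(k/2). Moreover total outflow equals total inflow: ∫₀¹ (F^k_1(1,y) + F^k_2(0,y)) dy + ∫₀¹ (F^k_3(x,1) + F^k_4(x,0)) dx = ∫₀¹ (f_{b1}(y)∧(k/2) + f_{b2}(y)∧(k/2)) dy + ∫₀¹ (f_{b3}(x)∧(k/2) + f_{b4}(x)∧(k/2)) dx. -/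

import Mathlib

open MeasureTheory Real Set Filter
open scoped Classical Topology ENNReal

noncomputable section

/-- The closed unit square `[0,1] × [0,1]`. -/
def UnitSq : Set (ℝ × ℝ) := Icc (0:ℝ) 1 ×ˢ Icc (0:ℝ) 1

/-- The truncation `a ↦ a / (1 + a/k)`. -/
def truncK (k a : ℝ) : ℝ := a / (1 + a / k)

/-- Nonnegative measurable boundary data on `[0,1]` with finite mass. -/
def IsBoundaryData (fb : Fin 4 → ℝ → ℝ) : Prop :=
  ∀ i, Measurable (fb i) ∧ (∀ u ∈ Icc (0:ℝ) 1, 0 ≤ fb i u) ∧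
    IntegrableOn (fb i) (Icc (0:ℝ) 1)

/-- Finite entropy of the boundary data. -/
def FiniteEntropy (fb : Fin 4 → ℝ → ℝ) : Prop :=
  ∀ i, IntegrableOn (fun u => fb i u * Real.log (1 + fb i u)) (Icc (0:ℝ) 1)

/-- The truncated collision term `Q^k`; indices `0,1,2,3` stand for `F₁,F₂,F₃,F₄`. -/
def Qk (k : ℝ) (F : Fin 4 → ℝ → ℝ → ℝ) (x y : ℝ) : ℝ :=
  truncK k (F 2 x y) * truncK k (F 3 x y) - truncK k (F 0 x y) * truncK k (F 1 x y)

/-- Nonnegative `L¹` mild solution of the truncated Broadwell system at level `k`. -/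
def MildTrunc (k : ℝ) (fb : Fin 4 → ℝ → ℝ) (F : Fin 4 → ℝ → ℝ → ℝ) : Prop :=
  (∀ i, Measurable (Function.uncurry (F i))) ∧
  (∀ i, ∀ᵐ p : ℝ × ℝ ∂(volume.restrict UnitSq), 0 ≤ F i p.1 p.2) ∧
  (∀ i, IntegrableOn (fun p : ℝ × ℝ => F i p.1 p.2) UnitSq) ∧
  (∀ᵐ p : ℝ × ℝ ∂(volume.restrict UnitSq),
    F 0 p.1 p.2 = min (fb 0 p.2) (k / 2) + ∫ X in (0:ℝ)..p.1, Qk k F X p.2) ∧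
  (∀ᵐ p : ℝ × ℝ ∂(volume.restrict UnitSq),
    F 1 p.1 p.2 = min (fb 1 p.2) (k / 2) + ∫ X in p.1..(1:ℝ), Qk k F X p.2) ∧
  (∀ᵐ p : ℝ × ℝ ∂(volume.restrict UnitSq),
    F 2 p.1 p.2 = min (fb 2 p.1) (k / 2) - ∫ Y in (0:ℝ)..p.2, Qk k F p.1 Y) ∧
  (∀ᵐ p : ℝ × ℝ ∂(volume.restrict UnitSq),
    F 3 p.1 p.2 = min (fb 3 p.1) (k / 2) - ∫ Y in p.2..(1:ℝ), Qk k F p.1 Y)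

/-- Outgoing trace of `F₁` at `x = 1`, read off from the mild form. -/
def trace1 (k : ℝ) (fb : Fin 4 → ℝ → ℝ) (F : Fin 4 → ℝ → ℝ → ℝ) (y : ℝ) : ℝ :=
  min (fb 0 y) (k / 2) + ∫ X in (0:ℝ)..(1:ℝ), Qk k F X y

/-- Outgoing trace of `F₂` at `x = 0`, read off from the mild form. -/
def trace2 (k : ℝ) (fb : Fin 4 → ℝ → ℝ) (F : Fin 4 → ℝ → ℝ → ℝ) (y : ℝ) : ℝ :=
  min (fb 1 y) (k / 2) + ∫ X in (0:ℝ)..(1:ℝ), Qk k F X y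

/-- Outgoing trace of `F₃` at `y = 1`, read off from the mild form. -/
def trace3 (k : ℝ) (fb : Fin 4 → ℝ → ℝ) (F : Fin 4 → ℝ → ℝ → ℝ) (x : ℝ) : ℝ :=
  min (fb 2 x) (k / 2) - ∫ Y in (0:ℝ)..(1:ℝ), Qk k F x Y

/-- Outgoing trace of `F₄` at `y = 0`, read off from the mild form. -/
def trace4 (k : ℝ) (fb : Fin 4 → ℝ → ℝ) (F : Fin 4 → ℝ → ℝ → ℝ) (x : ℝ) : ℝ :=
  min (fb 3 x) (k / 2) - ∫ Y in (0:ℝ)..(1:ℝ), Qk k F x Y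

/-- A smooth nonnegative mollifier with integral one, supported in the closed ball of radius `α`. -/
def IsMollifier (α : ℝ) (μ : ℝ × ℝ → ℝ) : Prop :=
  ContDiff ℝ (⊤ : ℕ∞) μ ∧ (∀ w, 0 ≤ μ w) ∧
    Function.support μ ⊆ Metric.closedBall 0 α ∧ (∫ w : ℝ × ℝ, μ w) = 1

/-- Extension of a function on `[0,1]²` by zero to all of `ℝ²`. -/
def extSq (f : ℝ → ℝ → ℝ) : ℝ × ℝ → ℝ := fun p => if p ∈ UnitSq then f p.1 p.2 else 0

/-- Convolution with a mollifier, after extension by zero outside `[0,1]²`. -/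
def molConv (f : ℝ → ℝ → ℝ) (μ : ℝ × ℝ → ℝ) (x y : ℝ) : ℝ :=
  ∫ w : ℝ × ℝ, extSq f ((x, y) - w) * μ w

/-- Right-hand side of the damped mollified equation for `F₁`. -/
def rhs1 (k : ℝ) (μ : ℝ × ℝ → ℝ) (f F : Fin 4 → ℝ → ℝ → ℝ) (x y : ℝ) : ℝ :=
  truncK k (F 2 x y) * truncK k (molConv (f 3) μ x y)
    - truncK k (F 0 x y) * truncK k (molConv (f 1) μ x y)

/-- Right-hand side of the damped mollified equation for `F₂`. -/
def rhs2 (k : ℝ) (μ : ℝ × ℝ → ℝ) (f F : Fin 4 → ℝ → ℝ → ℝ) (x y : ℝ) : ℝ :=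
  truncK k (molConv (f 2) μ x y) * truncK k (F 3 x y)
    - truncK k (molConv (f 0) μ x y) * truncK k (F 1 x y)

/-- Right-hand side of the damped mollified equation for `F₃`. -/
def rhs3 (k : ℝ) (μ : ℝ × ℝ → ℝ) (f F : Fin 4 → ℝ → ℝ → ℝ) (x y : ℝ) : ℝ :=
  truncK k (F 0 x y) * truncK k (molConv (f 1) μ x y)
    - truncK k (F 2 x y) * truncK k (molConv (f 3) μ x y)

/-- Right-hand side of the damped mollified equation for `F₄`. -/
def rhs4 (k : ℝ) (μ : ℝ × ℝ → ℝ) (f F : Fin 4 → ℝ → ℝ → ℝ) (x y : ℝ) : ℝ :=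
  truncK k (molConv (f 0) μ x y) * truncK k (F 1 x y)
    - truncK k (molConv (f 2) μ x y) * truncK k (F 3 x y)

/-- The constant `c_α = α⁻¹ ∫₀¹ Σᵢ f_{bi}`. -/
def cAlpha (α : ℝ) (fb : Fin 4 → ℝ → ℝ) : ℝ :=
  (1 / α) * ∫ u in Icc (0:ℝ) 1, ∑ i, fb i u

/-- Membership in the convex set `K_α`. -/
def MemK (α : ℝ) (fb : Fin 4 → ℝ → ℝ) (f : Fin 4 → ℝ → ℝ → ℝ) : Prop :=
  (∀ i, Measurable (Function.uncurry (f i))) ∧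
  (∀ i, ∀ᵐ p : ℝ × ℝ ∂(volume.restrict UnitSq), 0 ≤ f i p.1 p.2) ∧
  (∀ i, IntegrableOn (fun p : ℝ × ℝ => f i p.1 p.2) UnitSq) ∧
  (∑ i, ∫ p in UnitSq, f i p.1 p.2) ≤ cAlpha α fb

/-- Nonnegative `L¹` mild solution of the damped mollified system with data `f`. -/
def DampedMild (k α : ℝ) (fb : Fin 4 → ℝ → ℝ) (μ : ℝ × ℝ → ℝ)
    (f F : Fin 4 → ℝ → ℝ → ℝ) : Prop :=
  (∀ i, Measurable (Function.uncurry (F i))) ∧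
  (∀ i, ∀ᵐ p : ℝ × ℝ ∂(volume.restrict UnitSq), 0 ≤ F i p.1 p.2) ∧
  (∀ i, IntegrableOn (fun p : ℝ × ℝ => F i p.1 p.2) UnitSq) ∧
  (∀ᵐ p : ℝ × ℝ ∂(volume.restrict UnitSq),
    F 0 p.1 p.2 = min (fb 0 p.2) (k / 2)
      + ∫ X in (0:ℝ)..p.1, (rhs1 k μ f F X p.2 - α * F 0 X p.2)) ∧
  (∀ᵐ p : ℝ × ℝ ∂(volume.restrict UnitSq),
    F 1 p.1 p.2 = min (fb 1 p.2) (k / 2)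
      + ∫ X in p.1..(1:ℝ), (rhs2 k μ f F X p.2 - α * F 1 X p.2)) ∧
  (∀ᵐ p : ℝ × ℝ ∂(volume.restrict UnitSq),
    F 2 p.1 p.2 = min (fb 2 p.1) (k / 2)
      + ∫ Y in (0:ℝ)..p.2, (rhs3 k μ f F p.1 Y - α * F 2 p.1 Y)) ∧
  (∀ᵐ p : ℝ × ℝ ∂(volume.restrict UnitSq),
    F 3 p.1 p.2 = min (fb 3 p.1) (k / 2)
      + ∫ Y in p.2..(1:ℝ), (rhs4 k μ f F p.1 Y - α * F 3 p.1 Y))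

/-- The entropy-dissipation integrand `(a - b) log (a/b)`, interpreted as a nonnegative
extended-real number (it is `∞` when exactly one of `a`, `b` vanishes, `0` when both do). -/
def entDiss (a b : ℝ) : ℝ≥0∞ :=
  if a = 0 ∧ b = 0 then 0
  else if a = 0 ∨ b = 0 then ⊤
  else ENNReal.ofReal ((a - b) * Real.log (a / b))

/-- Relative compactness (sequential form) of a sequence of functions in `L¹(μ)`. -/
def RelCompL1 {X : Type*} [MeasurableSpace X] (μ : Measure X) (f : ℕ → X → ℝ) : Prop :=
  ∀ φ : ℕ → ℕ, StrictMono φ → ∃ ψ : ℕ → ℕ, StrictMono ψ ∧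
    ∃ g : X → ℝ, Integrable g μ ∧
      Tendsto (fun n => ∫ x, |f (φ (ψ n)) x - g x| ∂μ) atTop (𝓝 0)


section ConservationAux

open Function

lemma truncK_nonneg {k a : ℝ} (hk : 0 < k) (ha : 0 ≤ a) : 0 ≤ truncK k a :=
  div_nonneg ha (by positivity)

lemma truncK_le {k a : ℝ} (hk : 0 < k) (ha : 0 ≤ a) : truncK k a ≤ k := by
  have hd : (0:ℝ) < 1 + a / k := by positivity
  have hka : k * (a / k) = a := by
    rw [mul_comm, div_mul_cancel₀ _ hk.ne']
  have hexp : k * (1 + a / k) = k + a := by rw [mul_add, mul_one, hka]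
  rw [truncK, div_le_iff₀ hd, hexp]
  linarith

lemma measurable_truncK (k : ℝ) : Measurable (truncK k) := by
  unfold truncK
  exact measurable_id.div ((measurable_id.div_const k).const_add 1)

lemma Qk_meas {k : ℝ} {F : Fin 4 → ℝ → ℝ → ℝ}
    (hFm : ∀ i, Measurable (Function.uncurry (F i))) :
    Measurable fun p : ℝ × ℝ => Qk k F p.1 p.2 := by
  have ht := measurable_truncK k
  exact ((ht.comp (hFm 2)).mul (ht.comp (hFm 3))).sub
    ((ht.comp (hFm 0)).mul (ht.comp (hFm 1)))

/-- The collision term computed from the nonnegative parts of `F`. -/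
def QG (k : ℝ) (F : Fin 4 → ℝ → ℝ → ℝ) : ℝ → ℝ → ℝ :=
  Qk k (fun i x y => max (F i x y) 0)

lemma QG_eq {k : ℝ} {F : Fin 4 → ℝ → ℝ → ℝ} {x y : ℝ} (h : ∀ i, 0 ≤ F i x y) :
    Qk k F x y = QG k F x y := by
  simp only [QG, Qk]
  rw [max_eq_left (h 0), max_eq_left (h 1), max_eq_left (h 2), max_eq_left (h 3)]

lemma QG_meas {k : ℝ} {F : Fin 4 → ℝ → ℝ → ℝ}
    (hFm : ∀ i, Measurable (Function.uncurry (F i))) :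
    Measurable fun p : ℝ × ℝ => QG k F p.1 p.2 :=
  Qk_meas (fun i => (hFm i).max measurable_const)

lemma QG_bdd {k : ℝ} (hk : 0 < k) (F : Fin 4 → ℝ → ℝ → ℝ) (x y : ℝ) :
    |QG k F x y| ≤ k ^ 2 := by
  have htr : ∀ i, 0 ≤ truncK k (max (F i x y) 0) ∧ truncK k (max (F i x y) 0) ≤ k :=
    fun i => ⟨truncK_nonneg hk (le_max_right _ _), truncK_le hk (le_max_right _ _)⟩
  obtain ⟨h0a, h0b⟩ := htr 0
  obtain ⟨h1a, h1b⟩ := htr 1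
  obtain ⟨h2a, h2b⟩ := htr 2
  obtain ⟨h3a, h3b⟩ := htr 3
  simp only [QG, Qk]
  rw [abs_le]
  constructor <;> nlinarith

lemma QG_ii_left {k : ℝ} (hk : 0 < k) {F : Fin 4 → ℝ → ℝ → ℝ}
    (hFm : ∀ i, Measurable (Function.uncurry (F i))) (y a b : ℝ) :
    IntervalIntegrable (fun X => QG k F X y) volume a b := by
  rw [intervalIntegrable_iff]
  have hfin : volume (uIoc a b) < ⊤ := measure_Ioc_lt_top
  have hg : IntegrableOn (fun _ : ℝ => k ^ 2) (uIoc a b) volume :=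
    integrableOn_const hfin.ne
  refine hg.mono'
    (((QG_meas hFm).comp (measurable_id.prodMk measurable_const)).aestronglyMeasurable)
    (ae_of_all _ fun X => ?_)
  simpa [Real.norm_eq_abs] using QG_bdd hk F X y

lemma QG_ii_right {k : ℝ} (hk : 0 < k) {F : Fin 4 → ℝ → ℝ → ℝ}
    (hFm : ∀ i, Measurable (Function.uncurry (F i))) (x a b : ℝ) :
    IntervalIntegrable (fun Y => QG k F x Y) volume a b := by
  rw [intervalIntegrable_iff]
  have hfin : volume (uIoc a b) < ⊤ := measure_Ioc_lt_top
  have hg : IntegrableOn (fun _ : ℝ => k ^ 2) (uIoc a b) volume :=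
    integrableOn_const hfin.ne
  refine hg.mono'
    (((QG_meas hFm).comp (measurable_const.prodMk measurable_id)).aestronglyMeasurable)
    (ae_of_all _ fun Y => ?_)
  simpa [Real.norm_eq_abs] using QG_bdd hk F x Y

lemma ae_fst_prod {α β : Type*} [MeasurableSpace α] [MeasurableSpace β]
    {μ : Measure α} {ν : Measure β} [SFinite ν] {P : α → Prop}
    (h : ∀ᵐ x ∂μ, P x) : ∀ᵐ p ∂(μ.prod ν), P p.1 := by
  rw [ae_iff] at h ⊢
  obtain ⟨T, hTsub, hTm, hT0⟩ := exists_measurable_superset_of_null h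
  refine measure_mono_null (t := T ×ˢ (Set.univ : Set β)) (fun p hp => ?_) ?_
  · exact Set.mem_prod.mpr ⟨hTsub hp, Set.mem_univ _⟩
  · rw [Measure.prod_prod, hT0, zero_mul]

lemma ae_snd_prod {α β : Type*} [MeasurableSpace α] [MeasurableSpace β]
    {μ : Measure α} {ν : Measure β} [SFinite ν] {P : β → Prop}
    (h : ∀ᵐ y ∂ν, P y) : ∀ᵐ p ∂(μ.prod ν), P p.2 := by
  rw [ae_iff] at h ⊢
  obtain ⟨T, hTsub, hTm, hT0⟩ := exists_measurable_superset_of_null h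
  refine measure_mono_null (t := (Set.univ : Set α) ×ˢ T) (fun p hp => ?_) ?_
  · exact Set.mem_prod.mpr ⟨Set.mem_univ _, hTsub hp⟩
  · rw [Measure.prod_prod, hT0, mul_zero]

end ConservationAux

/-- conservation along characteristics (`∂_x(F₁+F₂) = 0`,
`∂_y(F₃+F₄) = 0`) and equality of total outflow and total inflow for the truncated
Broadwell system. -/
theorem truncated_conservation (fb : Fin 4 → ℝ → ℝ) (hfb : IsBoundaryData fb)
    (k : ℕ) (hk : 1 ≤ k) (F : Fin 4 → ℝ → ℝ → ℝ) (hF : MildTrunc (k : ℝ) fb F) :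
    (∀ᵐ p : ℝ × ℝ ∂(volume.restrict UnitSq),
      F 0 p.1 p.2 + F 1 p.1 p.2 = trace1 (k : ℝ) fb F p.2 + min (fb 1 p.2) ((k : ℝ) / 2)) ∧
    (∀ᵐ p : ℝ × ℝ ∂(volume.restrict UnitSq),
      F 2 p.1 p.2 + F 3 p.1 p.2 = trace3 (k : ℝ) fb F p.1 + min (fb 3 p.1) ((k : ℝ) / 2)) ∧
    ((∫ y in Icc (0:ℝ) 1, (trace1 (k : ℝ) fb F y + trace2 (k : ℝ) fb F y))
      + (∫ x in Icc (0:ℝ) 1, (trace3 (k : ℝ) fb F x + trace4 (k : ℝ) fb F x))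
      = (∫ y in Icc (0:ℝ) 1, (min (fb 0 y) ((k : ℝ) / 2) + min (fb 1 y) ((k : ℝ) / 2)))
        + (∫ x in Icc (0:ℝ) 1, (min (fb 2 x) ((k : ℝ) / 2) + min (fb 3 x) ((k : ℝ) / 2)))) := by
  classical
  obtain ⟨hFm, hFnn, hFint, heq0, heq1, heq2, heq3⟩ := hF
  have kpos : (0:ℝ) < (k:ℝ) := by exact_mod_cast Nat.lt_of_lt_of_le Nat.zero_lt_one hk
  set μ1 : Measure ℝ := volume.restrict (Icc (0:ℝ) 1) with hμ1
  have hsq : volume.restrict UnitSq = μ1.prod μ1 := by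
    rw [hμ1, Measure.prod_restrict, ← Measure.volume_eq_prod]; rfl
  haveI hfin1 : IsFiniteMeasure μ1 :=
    ⟨by rw [hμ1, Measure.restrict_apply_univ]; exact measure_Icc_lt_top⟩
  have h01 : (0:ℝ) ∈ Icc (0:ℝ) 1 := ⟨le_refl _, zero_le_one⟩
  have h11 : (1:ℝ) ∈ Icc (0:ℝ) 1 := ⟨zero_le_one, le_refl _⟩
  have hQm : Measurable (fun p : ℝ × ℝ => Qk (k:ℝ) F p.1 p.2) := Qk_meas hFm
  have hQ'm : Measurable (fun p : ℝ × ℝ => QG (k:ℝ) F p.1 p.2) := QG_meas hFm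
  -- a.e. equality of `Qk` and `QG` on the square
  have hnn : ∀ᵐ p ∂(μ1.prod μ1), ∀ i, 0 ≤ F i p.1 p.2 := by
    rw [← hsq]; exact ae_all_iff.mpr hFnn
  have hQQ' : ∀ᵐ p ∂(μ1.prod μ1), Qk (k:ℝ) F p.1 p.2 = QG (k:ℝ) F p.1 p.2 := by
    filter_upwards [hnn] with p hp using QG_eq hp
  have hmeasset : MeasurableSet {p : ℝ × ℝ | Qk (k:ℝ) F p.1 p.2 = QG (k:ℝ) F p.1 p.2} :=
    measurableSet_eq_fun hQm hQ'm
  have hsecx : ∀ᵐ x ∂μ1, ∀ᵐ y ∂μ1, Qk (k:ℝ) F x y = QG (k:ℝ) F x y :=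
    Measure.ae_ae_of_ae_prod hQQ'
  have hsecy : ∀ᵐ y ∂μ1, ∀ᵐ x ∂μ1, Qk (k:ℝ) F x y = QG (k:ℝ) F x y :=
    (Measure.ae_ae_comm hmeasset).mp hsecx
  -- changing `Qk` to `QG` in interval integrals
  have hsub : ∀ a ∈ Icc (0:ℝ) 1, ∀ b ∈ Icc (0:ℝ) 1, uIoc a b ⊆ Icc (0:ℝ) 1 := by
    intro a ha b hb X hX
    have hX' : X ∈ Ioc (a ⊓ b) (a ⊔ b) := hX
    exact ⟨le_of_lt (lt_of_le_of_lt (le_inf ha.1 hb.1) hX'.1),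
      hX'.2.trans (sup_le ha.2 hb.2)⟩
  have hcongrX : ∀ y, (∀ᵐ x ∂μ1, Qk (k:ℝ) F x y = QG (k:ℝ) F x y) →
      ∀ a ∈ Icc (0:ℝ) 1, ∀ b ∈ Icc (0:ℝ) 1,
        (∫ X in a..b, Qk (k:ℝ) F X y) = ∫ X in a..b, QG (k:ℝ) F X y := by
    intro y hy a ha b hb
    apply intervalIntegral.integral_congr_ae
    have h' := (ae_restrict_iff' measurableSet_Icc).mp hy
    filter_upwards [h'] with X hX hmem
    exact hX (hsub a ha b hb hmem)
  have hcongrY : ∀ x, (∀ᵐ y ∂μ1, Qk (k:ℝ) F x y = QG (k:ℝ) F x y) →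
      ∀ a ∈ Icc (0:ℝ) 1, ∀ b ∈ Icc (0:ℝ) 1,
        (∫ Y in a..b, Qk (k:ℝ) F x Y) = ∫ Y in a..b, QG (k:ℝ) F x Y := by
    intro x hx a ha b hb
    apply intervalIntegral.integral_congr_ae
    have h' := (ae_restrict_iff' measurableSet_Icc).mp hx
    filter_upwards [h'] with Y hY hmem
    exact hY (hsub a ha b hb hmem)
  -- splitting the interval integral
  have hsplitX : ∀ y, (∀ᵐ x ∂μ1, Qk (k:ℝ) F x y = QG (k:ℝ) F x y) → ∀ x ∈ Icc (0:ℝ) 1,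
      (∫ X in (0:ℝ)..x, Qk (k:ℝ) F X y) + ∫ X in x..(1:ℝ), Qk (k:ℝ) F X y
        = ∫ X in (0:ℝ)..(1:ℝ), Qk (k:ℝ) F X y := by
    intro y hy x hx
    rw [hcongrX y hy 0 h01 x hx, hcongrX y hy x hx 1 h11, hcongrX y hy 0 h01 1 h11]
    exact intervalIntegral.integral_add_adjacent_intervals
      (QG_ii_left kpos hFm y 0 x) (QG_ii_left kpos hFm y x 1)
  have hsplitY : ∀ x, (∀ᵐ y ∂μ1, Qk (k:ℝ) F x y = QG (k:ℝ) F x y) → ∀ y ∈ Icc (0:ℝ) 1,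
      (∫ Y in (0:ℝ)..y, Qk (k:ℝ) F x Y) + ∫ Y in y..(1:ℝ), Qk (k:ℝ) F x Y
        = ∫ Y in (0:ℝ)..(1:ℝ), Qk (k:ℝ) F x Y := by
    intro x hx y hy
    rw [hcongrY x hx 0 h01 y hy, hcongrY x hx y hy 1 h11, hcongrY x hx 0 h01 1 h11]
    exact intervalIntegral.integral_add_adjacent_intervals
      (QG_ii_right kpos hFm x 0 y) (QG_ii_right kpos hFm x y 1)
  have hmem : ∀ᵐ p ∂(μ1.prod μ1), p ∈ UnitSq := by
    rw [← hsq]; exact ae_restrict_mem (measurableSet_Icc.prod measurableSet_Icc)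
  rw [hsq] at heq0 heq1 heq2 heq3
  have hsecy_lift : ∀ᵐ p : ℝ × ℝ ∂(μ1.prod μ1),
      ∀ᵐ x ∂μ1, Qk (k:ℝ) F x p.2 = QG (k:ℝ) F x p.2 := ae_snd_prod hsecy
  have hsecx_lift : ∀ᵐ p : ℝ × ℝ ∂(μ1.prod μ1),
      ∀ᵐ y ∂μ1, Qk (k:ℝ) F p.1 y = QG (k:ℝ) F p.1 y := ae_fst_prod hsecx
  refine ⟨?_, ?_, ?_⟩
  · rw [hsq]
    filter_upwards [heq0, heq1, hsecy_lift, hmem] with p h0 h1 hy hp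
    have hx1 : p.1 ∈ Icc (0:ℝ) 1 := hp.1
    have hs := hsplitX p.2 hy p.1 hx1
    simp only [trace1]
    rw [h0, h1]
    linarith
  · rw [hsq]
    filter_upwards [heq2, heq3, hsecx_lift, hmem] with p h2 h3 hx hp
    have hy1 : p.2 ∈ Icc (0:ℝ) 1 := hp.2
    have hs := hsplitY p.1 hx p.2 hy1
    simp only [trace3]
    rw [h2, h3]
    linarith
  · -- total inflow = total outflow
    set ρ : Measure ℝ := volume.restrict (Ioc (0:ℝ) 1) with hρ
    have hμρ : μ1 = ρ := (Measure.restrict_congr_set Ioc_ae_eq_Icc).symm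
    haveI hfinρ : IsFiniteMeasure ρ :=
      ⟨by rw [hρ, Measure.restrict_apply_univ]; exact measure_Ioc_lt_top⟩
    set I' : ℝ → ℝ := fun y => ∫ X in (0:ℝ)..(1:ℝ), QG (k:ℝ) F X y with hI'
    set J' : ℝ → ℝ := fun x => ∫ Y in (0:ℝ)..(1:ℝ), QG (k:ℝ) F x Y with hJ'
    have hIunc : Integrable (fun p : ℝ × ℝ => QG (k:ℝ) F p.2 p.1) (ρ.prod ρ) := by
      refine (integrable_const ((k:ℝ)^2)).mono'
        ((hQ'm.comp measurable_swap).aestronglyMeasurable) (ae_of_all _ fun p => ?_)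
      simpa [Real.norm_eq_abs] using QG_bdd kpos F p.2 p.1
    have hFub : (∫ y, I' y ∂μ1) = ∫ x, J' x ∂μ1 := by
      rw [hμρ]
      simp only [hI', hJ', intervalIntegral.integral_of_le (zero_le_one (α := ℝ))]
      exact integral_integral_swap hIunc
    have hminint : ∀ i, Integrable (fun u => min (fb i u) ((k:ℝ)/2)) μ1 := by
      intro i
      have hg : Integrable (fun u => |fb i u| + (k:ℝ)/2) μ1 := by
        exact (hfb i).2.2.abs.add (integrable_const ((k:ℝ)/2))
      refine hg.mono'
        (((hfb i).1.min measurable_const).aestronglyMeasurable) (ae_of_all _ fun u => ?_)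
      show ‖min (fb i u) ((k:ℝ)/2)‖ ≤ |fb i u| + (k:ℝ)/2
      rw [Real.norm_eq_abs]
      rcases le_total (fb i u) ((k:ℝ)/2) with h | h
      · rw [min_eq_left h]; linarith [abs_nonneg (fb i u)]
      · rw [min_eq_right h, abs_of_nonneg (by linarith : (0:ℝ) ≤ (k:ℝ)/2)]
        linarith [abs_nonneg (fb i u)]
    have hI'meas : StronglyMeasurable I' := by
      rw [hI']
      simp only [intervalIntegral.integral_of_le (zero_le_one (α := ℝ))]
      exact hQ'm.stronglyMeasurable.integral_prod_left'
    have hJ'meas : StronglyMeasurable J' := by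
      rw [hJ']
      simp only [intervalIntegral.integral_of_le (zero_le_one (α := ℝ))]
      exact hQ'm.stronglyMeasurable.integral_prod_right'
    have hI'bdd : ∀ y, ‖I' y‖ ≤ (k:ℝ)^2 := by
      intro y
      have := intervalIntegral.norm_integral_le_of_norm_le_const
        (C := (k:ℝ)^2) (f := fun X => QG (k:ℝ) F X y) (a := 0) (b := 1)
        (fun X _ => by simpa [Real.norm_eq_abs] using QG_bdd kpos F X y)
      simpa [hI'] using this
    have hJ'bdd : ∀ x, ‖J' x‖ ≤ (k:ℝ)^2 := by
      intro x
      have := intervalIntegral.norm_integral_le_of_norm_le_const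
        (C := (k:ℝ)^2) (f := fun Y => QG (k:ℝ) F x Y) (a := 0) (b := 1)
        (fun Y _ => by simpa [Real.norm_eq_abs] using QG_bdd kpos F x Y)
      simpa [hJ'] using this
    have hI'int : Integrable I' μ1 :=
      (integrable_const ((k:ℝ)^2)).mono' hI'meas.aestronglyMeasurable (ae_of_all _ hI'bdd)
    have hJ'int : Integrable J' μ1 :=
      (integrable_const ((k:ℝ)^2)).mono' hJ'meas.aestronglyMeasurable (ae_of_all _ hJ'bdd)
    have e1 : (fun y => trace1 (k:ℝ) fb F y + trace2 (k:ℝ) fb F y)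
        =ᵐ[μ1] fun y => (min (fb 0 y) ((k:ℝ)/2) + min (fb 1 y) ((k:ℝ)/2)) + 2 * I' y := by
      filter_upwards [hsecy] with y hy
      simp only [trace1, trace2, hI']
      rw [hcongrX y hy 0 h01 1 h11]
      ring
    have e2 : (fun x => trace3 (k:ℝ) fb F x + trace4 (k:ℝ) fb F x)
        =ᵐ[μ1] fun x => (min (fb 2 x) ((k:ℝ)/2) + min (fb 3 x) ((k:ℝ)/2)) - 2 * J' x := by
      filter_upwards [hsecx] with x hx
      simp only [trace3, trace4, hJ']
      rw [hcongrY x hx 0 h01 1 h11]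
      ring
    have hmin01 : Integrable (fun u => min (fb 0 u) ((k:ℝ)/2) + min (fb 1 u) ((k:ℝ)/2)) μ1 := by
      exact (hminint 0).add (hminint 1)
    have hmin23 : Integrable (fun u => min (fb 2 u) ((k:ℝ)/2) + min (fb 3 u) ((k:ℝ)/2)) μ1 := by
      exact (hminint 2).add (hminint 3)
    have hI2 : Integrable (fun y => 2 * I' y) μ1 := hI'int.const_mul 2
    have hJ2 : Integrable (fun x => 2 * J' x) μ1 := hJ'int.const_mul 2
    have hA : (∫ y, ((min (fb 0 y) ((k:ℝ)/2) + min (fb 1 y) ((k:ℝ)/2)) + 2 * I' y) ∂μ1)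
        = (∫ y, (min (fb 0 y) ((k:ℝ)/2) + min (fb 1 y) ((k:ℝ)/2)) ∂μ1)
          + 2 * ∫ y, I' y ∂μ1 := by
      rw [integral_add hmin01 hI2, integral_const_mul]
    have hB : (∫ x, ((min (fb 2 x) ((k:ℝ)/2) + min (fb 3 x) ((k:ℝ)/2)) - 2 * J' x) ∂μ1)
        = (∫ x, (min (fb 2 x) ((k:ℝ)/2) + min (fb 3 x) ((k:ℝ)/2)) ∂μ1)
          - 2 * ∫ x, J' x ∂μ1 := by
      rw [integral_sub hmin23 hJ2, integral_const_mul]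
    rw [integral_congr_ae e1, integral_congr_ae e2, hA, hB, hFub]
    ring
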